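/- Let n ≥ 2, ε > 0, τ ∈ ℝ, and let w₀ ∈ H¹(ℝ) be complex-valued. Then Φ_B^τ(w₀) := w₀·exp(−iτ f_n^ε(|w₀|²)) satisfies ‖Φ_B^τ(w₀)‖_{L²} = ‖w₀‖_{L²} and ‖∂_x Φ_B^τ(w₀)‖_{L²} ≤ (1 + 6|τ|)‖∂_x w₀‖_{L²}. -/

import Mathlib

open Real Complex MeasureTheory

/-- `q_n^ε`, the polynomial part of the locally regularized logarithm on `[0, ε²)`. -/
noncomputable def qfun (n : ℕ) (ε ρ : ℝ) : ℝ :=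
  Real.log (ε ^ 2) - ((n + 1 : ℝ) / n) * (1 - ρ / ε ^ 2) ^ n
    - ∑ k ∈ Finset.Icc 1 (n - 1), (1 / (k : ℝ)) * (1 - ρ / ε ^ 2) ^ k

/-- The locally regularized logarithm `f_n^ε` of the LER construction. -/
noncomputable def freg (n : ℕ) (ε ρ : ℝ) : ℝ :=
  if ε ^ 2 ≤ ρ then Real.log ρ else qfun n ε ρ

/-- The pointwise nonlinear flow `Φ_B^τ(w) = w exp(−iτ f_n^ε(|w|²))`. -/
noncomputable def PhiB (n : ℕ) (ε τ : ℝ) (w : ℂ) : ℂ :=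
  w * Complex.exp (-(Complex.I * τ * (freg n ε (‖w‖ ^ 2) : ℝ)))

/-!
Since `‖exp (-(I * τ * r))‖ = 1` for real `r`, `Φ_B^τ` preserves `‖w‖` pointwise. For the
derivative, the chain rule gives `∂ₓ Φ_B^τ(w) = e^{-iτ f(|w|²)} (w' - iτ f'(|w|²) 2⟨w, w'⟩ w)`,
and the second term is at most `2 |τ| (ρ f'(ρ)) ‖w'‖` with `ρ = |w|²`. Everything thus rests on
`0 ≤ ρ f'(ρ) ≤ 3`: on `[ε², ∞)` this is `ρ ρ⁻¹ = 1`; on `[0, ε²)`, with `u = 1 - ρ / ε²`,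
`ρ q'(ρ) = (1 - u) ((n + 1) u^{n-1} + ∑_{k < n-1} u^k)`, and each of `(1 - u) n u^{n-1}`,
`(1 - u) u^{n-1}` and `(1 - u) ∑_{k < n-1} u^k` is at most `1` by the geometric sum formula.
For `n ≥ 2` the two pieces of `f` have the same value and slope at `ε²`, so `f` is differentiable.
-/

lemma sum_Icc_one_pow_sub_one (u : ℝ) (m : ℕ) :
    ∑ k ∈ Finset.Icc 1 m, u ^ (k - 1) = ∑ k ∈ Finset.range m, u ^ k := by
  rw [← Finset.Ico_add_one_right_eq_Icc, Finset.sum_Ico_eq_sum_range]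
  simp

lemma natCast_mul_pow_sub_one_le_geom_sum {u : ℝ} (hu₀ : 0 ≤ u) (hu₁ : u ≤ 1) (n : ℕ) :
    n * u ^ (n - 1) ≤ ∑ k ∈ Finset.range n, u ^ k := by
  simpa using Finset.card_nsmul_le_sum (Finset.range n) (u ^ ·) (u ^ (n - 1))
    fun k hk => pow_le_pow_of_le_one hu₀ hu₁ (by grind)

lemma one_sub_mul_geom_sum_le_one {u : ℝ} (hu₀ : 0 ≤ u) (n : ℕ) :
    (1 - u) * ∑ k ∈ Finset.range n, u ^ k ≤ 1 := by
  rw [mul_neg_geom_sum]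
  linarith [pow_nonneg hu₀ n]

theorem norm_exp_neg_I_mul_ofReal (τ r : ℝ) : ‖cexp (-(I * τ * r))‖ = 1 := by
  simp [Complex.norm_exp]

theorem norm_phiB (n : ℕ) (ε τ : ℝ) (w : ℂ) : ‖PhiB n ε τ w‖ = ‖w‖ := by
  rw [PhiB, norm_mul, norm_exp_neg_I_mul_ofReal, mul_one]

noncomputable def qfunDeriv (n : ℕ) (ε ρ : ℝ) : ℝ :=
  ((n + 1) * (1 - ρ / ε ^ 2) ^ (n - 1) + ∑ k ∈ Finset.range (n - 1), (1 - ρ / ε ^ 2) ^ k)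
    / ε ^ 2

noncomputable def fregDeriv (n : ℕ) (ε ρ : ℝ) : ℝ :=
  if ε ^ 2 ≤ ρ then ρ⁻¹ else qfunDeriv n ε ρ

section

open scoped InnerProductSpace

variable {n : ℕ} {ε : ℝ}

theorem hasDerivAt_qfun (hn : n ≠ 0) (hε : ε ≠ 0) (ρ : ℝ) :
    HasDerivAt (qfun n ε) (qfunDeriv n ε ρ) ρ := by
  have hu : HasDerivAt (fun ρ : ℝ => 1 - ρ / ε ^ 2) (-(1 / ε ^ 2)) ρ := by
    simpa using ((hasDerivAt_id ρ).div_const (ε ^ 2)).const_sub 1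
  have hsum : HasDerivAt (fun ρ => ∑ k ∈ Finset.Icc 1 (n - 1), 1 / (k : ℝ) * (1 - ρ / ε ^ 2) ^ k)
      (-((∑ k ∈ Finset.range (n - 1), (1 - ρ / ε ^ 2) ^ k) / ε ^ 2)) ρ := by
    rw [← sum_Icc_one_pow_sub_one, Finset.sum_div, ← Finset.sum_neg_distrib]
    refine HasDerivAt.fun_sum fun k hk => ((hu.fun_pow k).const_mul _).congr_deriv ?_
    have : (k : ℝ) ≠ 0 := Nat.cast_ne_zero.mpr (by grind)
    field_simp
  have hq : HasDerivAt (qfun n ε) (0 - (n + 1 : ℝ) / n * (n * (1 - ρ / ε ^ 2) ^ (n - 1) *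
      -(1 / ε ^ 2)) - -((∑ k ∈ Finset.range (n - 1), (1 - ρ / ε ^ 2) ^ k) / ε ^ 2)) ρ :=
    ((hasDerivAt_const ρ _).fun_sub ((hu.fun_pow n).const_mul _)).fun_sub hsum
  refine hq.congr_deriv ?_
  have : (n : ℝ) ≠ 0 := Nat.cast_ne_zero.mpr hn
  rw [qfunDeriv]
  field_simp
  ring

theorem qfun_sq (hn : n ≠ 0) (hε : ε ≠ 0) : qfun n ε (ε ^ 2) = Real.log (ε ^ 2) := by
  simp only [qfun, div_self (pow_ne_zero 2 hε), sub_self, zero_pow hn, mul_zero, sub_zero]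
  rw [Finset.sum_eq_zero fun k hk => by simp [show k ≠ 0 by grind], sub_zero]

theorem qfunDeriv_sq (hn : 2 ≤ n) (hε : ε ≠ 0) : qfunDeriv n ε (ε ^ 2) = (ε ^ 2)⁻¹ := by
  obtain ⟨m, rfl⟩ := Nat.exists_eq_add_of_le' hn
  simp [qfunDeriv, hε, Finset.sum_range_succ']

theorem hasDerivAt_freg (hn : 2 ≤ n) (hε : ε ≠ 0) (ρ : ℝ) :
    HasDerivAt (freg n ε) (fregDeriv n ε ρ) ρ := by
  have hq := hasDerivAt_qfun (n := n) (by omega) hε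
  rcases lt_trichotomy ρ (ε ^ 2) with hlt | rfl | hgt
  · rw [fregDeriv, if_neg hlt.not_ge]
    refine (hq ρ).congr_of_eventuallyEq ?_
    filter_upwards [Iio_mem_nhds hlt] with y hy using if_neg (not_le.mpr hy)
  · have hlog : freg n ε (ε ^ 2) = Real.log (ε ^ 2) := if_pos le_rfl
    rw [fregDeriv, if_pos le_rfl]
    have hleft : HasDerivWithinAt (freg n ε) (ε ^ 2)⁻¹ (Set.Iic (ε ^ 2)) (ε ^ 2) := by
      rw [← qfunDeriv_sq hn hε]
      refine (hq _).hasDerivWithinAt.congr (fun y hy => ?_) (by rw [hlog, qfun_sq (by omega) hε])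
      rcases (Set.mem_Iic.mp hy).eq_or_lt with rfl | hy
      · rw [hlog, qfun_sq (by omega) hε]
      · exact if_neg hy.not_ge
    have hright : HasDerivWithinAt (freg n ε) (ε ^ 2)⁻¹ (Set.Ici (ε ^ 2)) (ε ^ 2) :=
      (Real.hasDerivAt_log (by positivity)).hasDerivWithinAt.congr (fun y hy => if_pos hy) hlog
    simpa using hleft.union hright
  · rw [fregDeriv, if_pos hgt.le]
    refine (Real.hasDerivAt_log ((sq_nonneg ε).trans_lt hgt).ne').congr_of_eventuallyEq ?_
    filter_upwards [Ioi_mem_nhds hgt] with y hy using if_pos hy.le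

theorem fregDeriv_nonneg {ρ : ℝ} (hρ : 0 ≤ ρ) : 0 ≤ fregDeriv n ε ρ := by
  unfold fregDeriv
  split_ifs with h
  · positivity
  · have hε : 0 < ε ^ 2 := hρ.trans_lt (not_le.mp h)
    have : 0 ≤ 1 - ρ / ε ^ 2 := by rw [sub_nonneg, div_le_one hε]; exact (not_le.mp h).le
    unfold qfunDeriv
    positivity

theorem mul_fregDeriv_le_three {ρ : ℝ} (hρ : 0 ≤ ρ) : ρ * fregDeriv n ε ρ ≤ 3 := by
  unfold fregDeriv
  split_ifs with h
  · linarith [mul_inv_le_one (a := ρ)]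
  · have hε : 0 < ε ^ 2 := hρ.trans_lt (not_le.mp h)
    set u := 1 - ρ / ε ^ 2 with hu
    have hu₀ : 0 ≤ u := by rw [sub_nonneg, div_le_one hε]; exact (not_le.mp h).le
    have hu₁ : u ≤ 1 := sub_le_self 1 (by positivity)
    have hρu : ρ * qfunDeriv n ε ρ =
        (1 - u) * ((n + 1) * u ^ (n - 1) + ∑ k ∈ Finset.range (n - 1), u ^ k) := by
      rw [qfunDeriv, hu]
      field_simp
      ring
    have hnu := mul_le_mul_of_nonneg_left (natCast_mul_pow_sub_one_le_geom_sum hu₀ hu₁ n)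
      (sub_nonneg.mpr hu₁)
    have hlast : (1 - u) * u ^ (n - 1) ≤ 1 :=
      mul_le_one₀ (by linarith) (pow_nonneg hu₀ _) (pow_le_one₀ hu₀ hu₁)
    rw [hρu]
    linarith [one_sub_mul_geom_sum_le_one hu₀ n, one_sub_mul_geom_sum_le_one hu₀ (n - 1)]

variable {w : ℝ → ℂ} {w' : ℂ} {x : ℝ}

theorem HasDerivAt.phiB_comp (hn : 2 ≤ n) (hε : ε ≠ 0) (τ : ℝ) (hw : HasDerivAt w w' x) :
    HasDerivAt (fun x => PhiB n ε τ (w x))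
      (cexp (-(I * τ * (freg n ε (‖w x‖ ^ 2) : ℂ))) *
        (w' - I * τ * (fregDeriv n ε (‖w x‖ ^ 2) * (2 * ⟪w x, w'⟫_ℝ) : ℝ) * w x)) x := by
  have hf := (hasDerivAt_freg hn hε _).comp x hw.norm_sq
  refine (hw.mul (hf.ofReal_comp.const_mul (I * τ)).neg.cexp).congr_deriv ?_
  simp only [Pi.neg_apply, Function.comp_apply]
  ring

theorem norm_deriv_phiB_comp_le (hn : 2 ≤ n) (hε : ε ≠ 0) (τ : ℝ) (hw : HasDerivAt w w' x) :
    ‖deriv (fun x => PhiB n ε τ (w x)) x‖ ≤ (1 + 6 * |τ|) * ‖w'‖ := by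
  set ρ := ‖w x‖ ^ 2
  set c := fregDeriv n ε ρ * (2 * ⟪w x, w'⟫_ℝ)
  have hD := fregDeriv_nonneg (n := n) (ε := ε) (sq_nonneg ‖w x‖)
  have hc : |c| * ‖w x‖ ≤ 6 * ‖w'‖ :=
    calc |c| * ‖w x‖ = 2 * fregDeriv n ε ρ * ‖w x‖ * |⟪w x, w'⟫_ℝ| := by
          rw [abs_mul, abs_mul, abs_of_nonneg hD, abs_two]; ring
      _ ≤ 2 * fregDeriv n ε ρ * ‖w x‖ * (‖w x‖ * ‖w'‖) := by
          gcongr; exact abs_real_inner_le_norm _ _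
      _ = 2 * (ρ * fregDeriv n ε ρ) * ‖w'‖ := by ring
      _ ≤ 2 * 3 * ‖w'‖ := by gcongr; exact mul_fregDeriv_le_three (sq_nonneg _)
      _ = 6 * ‖w'‖ := by ring
  rw [(hw.phiB_comp hn hε τ).deriv, norm_mul, norm_exp_neg_I_mul_ofReal, one_mul]
  calc ‖w' - I * τ * c * w x‖ ≤ ‖w'‖ + |τ| * (|c| * ‖w x‖) := by
        refine (norm_sub_le _ _).trans_eq ?_
        simp [mul_assoc]
    _ ≤ ‖w'‖ + |τ| * (6 * ‖w'‖) := by gcongr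
    _ = (1 + 6 * |τ|) * ‖w'‖ := by ring

end

theorem stmt16_general (n : ℕ) (hn : 2 ≤ n) (ε : ℝ) (hε : 0 < ε) (τ : ℝ)
    (w₀ : ℝ → ℂ) (hdiff : Differentiable ℝ w₀) :
    eLpNorm (fun x => PhiB n ε τ (w₀ x)) 2 volume = eLpNorm w₀ 2 volume ∧
    eLpNorm (deriv fun x => PhiB n ε τ (w₀ x)) 2 volume ≤
      ENNReal.ofReal (1 + 6 * |τ|) * eLpNorm (deriv w₀) 2 volume :=
  ⟨eLpNorm_congr_norm_ae (ae_of_all _ fun x => norm_phiB n ε τ (w₀ x)),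
    eLpNorm_le_mul_eLpNorm_of_ae_le_mul
      (ae_of_all _ fun x => norm_deriv_phiB_comp_le hn hε.ne' τ (hdiff x).hasDerivAt) 2⟩

/-- For `w₀ ∈ H¹(ℝ)`: `Φ_B^τ` conserves the `L²` norm and
`‖∂ₓ Φ_B^τ(w₀)‖_{L²} ≤ (1 + 6|τ|)‖∂ₓ w₀‖_{L²}`. -/
theorem stmt16 (n : ℕ) (hn : 2 ≤ n) (ε : ℝ) (hε : 0 < ε) (τ : ℝ)
    (w₀ : ℝ → ℂ) (hdiff : Differentiable ℝ w₀)
    (hL2 : MemLp w₀ 2 (volume : Measure ℝ))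
    (hdL2 : MemLp (deriv w₀) 2 (volume : Measure ℝ)) :
    eLpNorm (fun x => PhiB n ε τ (w₀ x)) 2 volume = eLpNorm w₀ 2 volume ∧
    eLpNorm (deriv fun x => PhiB n ε τ (w₀ x)) 2 volume ≤
      ENNReal.ofReal (1 + 6 * |τ|) * eLpNorm (deriv w₀) 2 volume :=
  stmt16_general n hn ε hε τ w₀ hdiff
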